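/- arXiv:1207.1004 — 4 statements merged into one kernel-verified Lean document; each statement's English description precedes it below -/
import Mathlib

section
/- Let K be a compact subset of ℝ^d and let α > 0 be such that H^α(K ∩ V_a) = 0 for every a ∈ ℝ, where V_a = {x ∈ ℝ^d : x_1 = a}. Then for every compact set L ⊂ K and every integer k > 0, the map g : ℝ → ℝ defined by g(u) = M^α_{2^{-k}}(L ∩ {x ∈ ℝ^d : x_1 ≤ u}) is continuous. -/
open MeasureTheory Filter Metric Set Topology
open scoped ENNReal

/-- The half-open dyadic cube of generation `k` indexed by `m ∈ ℤ^d`: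
`∏ᵢ [mᵢ 2^{-k}, (mᵢ+1) 2^{-k})`. -/
def dyadicCube {d : ℕ} (k : ℕ) (m : Fin d → ℤ) : Set (EuclideanSpace ℝ (Fin d)) :=
  {x | ∀ i, (m i : ℝ) / 2 ^ k ≤ x i ∧ x i < ((m i : ℝ) + 1) / 2 ^ k}

/-- The `s`-dimensional net premeasure at scale `δ`: `inf ∑ |Bᵢ|^s` over countable covers
of `E` by dyadic cubes of diameter at most `δ`. -/
noncomputable def netPre {d : ℕ} (s δ : ℝ) (E : Set (EuclideanSpace ℝ (Fin d))) : ℝ≥0∞ :=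
  ⨅ (C : Set (ℕ × (Fin d → ℤ))) (_ : C.Countable)
    (_ : E ⊆ ⋃ p ∈ C, dyadicCube p.1 p.2)
    (_ : ∀ p ∈ C, Metric.diam (dyadicCube p.1 p.2) ≤ δ),
    ∑' p : C, ENNReal.ofReal (Metric.diam (dyadicCube (p : ℕ × (Fin d → ℤ)).1
      (p : ℕ × (Fin d → ℤ)).2) ^ s)

/-!
The map is monotone, so it suffices to rule out jumps. For `v ≤ w` close to `a`, the set
`{x ∈ L | x₁ ≤ w}` is covered by `{x ∈ L | x₁ ≤ v}` and a thin slab of `L` around the hyperplane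
`V_a`, and subadditivity of the net premeasure bounds the jump by the premeasure of that slab.
The slice `L ∩ V_a` is `H^α`-null, so it is covered by open balls `B(xₙ, Rₙ)` with `∑ Rₙ^α`
arbitrarily small; each such ball is covered by `2^d` dyadic cubes of side comparable to `Rₙ`, so
this open neighbourhood of the slice has small net premeasure, and by compactness of `L` it
contains a whole slab.
-/

theorem IsCompact.exists_inter_preimage_closedBall_subset {X Y : Type*} [TopologicalSpace X]
    [MetricSpace Y] {L U : Set X} (hL : IsCompact L) (hU : IsOpen U) {f : X → Y}
    (hf : Continuous f) {a : Y} (haU : L ∩ f ⁻¹' {a} ⊆ U) :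
    ∃ η > 0, L ∩ f ⁻¹' closedBall a η ⊆ U := by
  have ha : (f '' (L \ U))ᶜ ∈ 𝓝 a := by
    refine ((hL.diff hU).image hf).isClosed.isOpen_compl.mem_nhds ?_
    rintro ⟨x, ⟨hxL, hxU⟩, rfl⟩
    exact hxU (haU ⟨hxL, rfl⟩)
  obtain ⟨η, hη, hηa⟩ := nhds_basis_closedBall.mem_iff.1 ha
  refine ⟨η, hη, fun x ⟨hxL, hx⟩ => ?_⟩
  by_contra hxU
  exact hηa hx ⟨x, ⟨hxL, hxU⟩, rfl⟩

theorem Monotone.continuous_of_forall_le_add {f : ℝ → ℝ} (hf : Monotone f)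
    (h : ∀ a, ∀ ε > 0, ∃ η > 0, f (a + η) ≤ f (a - η) + ε) : Continuous f := by
  refine Metric.continuous_iff.2 fun a ε hε => ?_
  obtain ⟨η, hη, hjump⟩ := h a (ε / 2) (half_pos hε)
  refine ⟨η, hη, fun u hu => ?_⟩
  rw [Real.dist_eq, abs_lt] at hu
  have hu₁ := hf (show a - η ≤ u by linarith)
  have hu₂ := hf (show u ≤ a + η by linarith)
  have ha₁ := hf (show a - η ≤ a by linarith)
  have ha₂ := hf (show a ≤ a + η by linarith)
  rw [Real.dist_eq, abs_lt]
  constructor <;> linarith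

theorem exists_cover_tsum_ediam_rpow_lt {X : Type*} [EMetricSpace X] [MeasurableSpace X]
    [BorelSpace X] {α : ℝ} (hα : 0 < α) {S : Set X} (hS : μH[α] S = 0) {r ε : ℝ≥0∞}
    (hr : 0 < r) (hε : ε ≠ 0) :
    ∃ t : ℕ → Set X, S ⊆ ⋃ n, t n ∧ (∀ n, ediam (t n) ≤ r) ∧
      ∑' n, ediam (t n) ^ α < ε := by
  have hinf : ⨅ (t : ℕ → Set X) (_ : S ⊆ ⋃ n, t n) (_ : ∀ n, ediam (t n) ≤ r),
      ∑' n, ⨆ _ : (t n).Nonempty, ediam (t n) ^ α < ε := by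
    refine lt_of_le_of_lt ?_ (pos_iff_ne_zero.2 hε)
    rw [← hS, Measure.hausdorffMeasure_apply]
    exact le_iSup₂ (f := fun r (_ : 0 < r) => ⨅ (t : ℕ → Set X) (_ : S ⊆ ⋃ n, t n)
      (_ : ∀ n, ediam (t n) ≤ r), ∑' n, ⨆ _ : (t n).Nonempty, ediam (t n) ^ α) r hr
  simp only [iInf_lt_iff] at hinf
  obtain ⟨t, hSt, htr, hsum⟩ := hinf
  refine ⟨t, hSt, htr, lt_of_le_of_lt (ENNReal.tsum_le_tsum fun n => ?_) hsum⟩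
  rcases (t n).eq_empty_or_nonempty with hempty | hne
  · simp [hempty, hα]
  · exact le_iSup_of_le hne le_rfl

theorem exists_pos_le_ofReal_rpow_le {α : ℝ} (hα : 0 < α) {r : ℝ} (hr : 0 < r) {c : ℝ≥0∞}
    (hc : 0 < c) : ∃ ρ : ℝ, 0 < ρ ∧ ρ ≤ r ∧ ENNReal.ofReal ρ ^ α ≤ c := by
  have hlim : Tendsto (fun ρ : ℝ => ENNReal.ofReal ρ ^ α) (𝓝 0) (𝓝 0) := by
    simpa [Function.comp_def, ENNReal.zero_rpow_of_pos hα] using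
      ((ENNReal.continuous_rpow_const (y := α)).comp ENNReal.continuous_ofReal).tendsto 0
  obtain ⟨ρ, ⟨hρc, hρr⟩, hρ0⟩ := ((((hlim.eventually (ge_mem_nhds hc)).and
    (eventually_le_nhds hr)).filter_mono nhdsWithin_le_nhds).and
    (self_mem_nhdsWithin : Ioi (0 : ℝ) ∈ 𝓝[>] 0)).exists
  exact ⟨ρ, hρ0, hρr, hρc⟩

theorem exists_ball_cover_tsum_rpow_le {X : Type*} [MetricSpace X] [MeasurableSpace X]
    [BorelSpace X] [Nonempty X] {α : ℝ} (hα : 0 < α) {S : Set X} (hS : μH[α] S = 0) {r : ℝ}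
    (hr : 0 < r) {ε : ℝ≥0∞} (hε : ε ≠ 0) :
    ∃ (x : ℕ → X) (R : ℕ → ℝ), (∀ n, 0 < R n ∧ R n ≤ r) ∧ S ⊆ ⋃ n, ball (x n) (R n) ∧
      ∑' n, ENNReal.ofReal (R n) ^ α ≤ ε := by
  -- `R n = diam (t n) + ρ n`, and `(a + b)^α ≤ 2^α (a^α + b^α)` costs the factor `2^α`.
  set c : ℝ≥0∞ := 2 * 2 ^ α
  have hε₀ : ε / c ≠ 0 := ENNReal.div_ne_zero.2
    ⟨hε, ENNReal.mul_ne_top (by simp) (ENNReal.rpow_ne_top_of_nonneg hα.le (by simp))⟩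
  obtain ⟨t, hSt, htr, hsum⟩ :=
    exists_cover_tsum_ediam_rpow_lt hα hS (ENNReal.ofReal_pos.2 (half_pos hr)) hε₀
  have htop : ∀ n, ediam (t n) ≠ ⊤ := fun n => ne_top_of_le_ne_top ENNReal.ofReal_ne_top (htr n)
  obtain ⟨ε', hε'0, hε'⟩ := ENNReal.exists_pos_sum_of_countable' hε₀ ℕ
  choose ρ hρ0 hρr hρε using fun n => exists_pos_le_ofReal_rpow_le hα (half_pos hr) (hε'0 n)
  have hx : ∀ n, ∃ x, t n ⊆ closedBall x (ediam (t n)).toReal := by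
    intro n
    rcases (t n).eq_empty_or_nonempty with hempty | ⟨x, hx⟩
    · exact ⟨Classical.arbitrary X, hempty ▸ empty_subset _⟩
    · exact ⟨x, fun y hy => dist_le_diam_of_mem (isBounded_iff_ediam_ne_top.2 (htop n)) hy hx⟩
  choose x hx using hx
  refine ⟨x, fun n => (ediam (t n)).toReal + ρ n,
    fun n => ⟨add_pos_of_nonneg_of_pos ENNReal.toReal_nonneg (hρ0 n), ?_⟩, ?_, ?_⟩
  · linarith [ENNReal.toReal_le_of_le_ofReal (half_pos hr).le (htr n), hρr n]
  · exact hSt.trans (iUnion_mono fun n => (hx n).trans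
      (closedBall_subset_ball (lt_add_of_pos_right _ (hρ0 n))))
  · calc ∑' n, ENNReal.ofReal ((ediam (t n)).toReal + ρ n) ^ α
        = ∑' n, (ediam (t n) + ENNReal.ofReal (ρ n)) ^ α := by
          congr! 2 with n
          rw [ENNReal.ofReal_add ENNReal.toReal_nonneg (hρ0 n).le, ENNReal.ofReal_toReal (htop n)]
      _ ≤ ∑' n, 2 ^ α * (ediam (t n) ^ α + ENNReal.ofReal (ρ n) ^ α) :=
          ENNReal.tsum_le_tsum fun n => ENNReal.add_rpow_le_two_rpow_mul_rpow_add_rpow _ _ hα.le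
      _ = 2 ^ α * (∑' n, ediam (t n) ^ α + ∑' n, ENNReal.ofReal (ρ n) ^ α) := by
          rw [ENNReal.tsum_mul_left, ENNReal.tsum_add]
      _ ≤ 2 ^ α * (ε / c + ε / c) := by
          gcongr
          exact (ENNReal.tsum_le_tsum hρε).trans hε'.le
      _ = c * (ε / c) := by ring
      _ ≤ ε := ENNReal.mul_div_le

section NetPremeasure

variable {d : ℕ}

theorem mem_dyadicCube_floor (j : ℕ) (x : EuclideanSpace ℝ (Fin d)) :
    x ∈ dyadicCube j (fun i => ⌊x i * 2 ^ j⌋) := fun i => by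
  have h2 : (0 : ℝ) < 2 ^ j := by positivity
  rw [div_le_iff₀ h2, lt_div_iff₀ h2]
  exact ⟨Int.floor_le _, Int.lt_floor_add_one _⟩

theorem diam_dyadicCube_le (j : ℕ) (m : Fin d → ℤ) :
    diam (dyadicCube j m) ≤ √d / 2 ^ j := by
  refine diam_le_of_forall_dist_le (by positivity) fun x hx y hy => ?_
  have hcoord : ∀ i, dist (x i) (y i) ≤ 1 / 2 ^ j := fun i => by
    have h : ((m i : ℝ) + 1) / 2 ^ j = (m i : ℝ) / 2 ^ j + 1 / 2 ^ j := by ring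
    rw [Real.dist_eq, abs_sub_le_iff]
    constructor <;> linarith [hx i, hy i]
  calc dist x y = √(∑ i, dist (x i) (y i) ^ 2) := EuclideanSpace.dist_eq x y
    _ ≤ √(∑ _i : Fin d, (1 / 2 ^ j : ℝ) ^ 2) := Real.sqrt_le_sqrt <|
        Finset.sum_le_sum fun i _ => pow_le_pow_left₀ dist_nonneg (hcoord i) 2
    _ = √d / 2 ^ j := by
        rw [Finset.sum_const, Finset.card_univ, Fintype.card_fin, nsmul_eq_mul,
          Real.sqrt_mul (Nat.cast_nonneg d), Real.sqrt_sq (by positivity)]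
        ring

theorem closedBall_subset_iUnion_dyadicCube (x : EuclideanSpace ℝ (Fin d)) (R : ℝ) (j : ℕ) :
    closedBall x R ⊆ ⋃ m ∈ Fintype.piFinset fun i =>
      Finset.Icc ⌊(x i - R) * 2 ^ j⌋ ⌊(x i + R) * 2 ^ j⌋, dyadicCube j m := by
  intro y hy
  refine mem_iUnion₂.2 ⟨_, Fintype.mem_piFinset.2 fun i => ?_, mem_dyadicCube_floor j y⟩
  have hyi := (PiLp.dist_apply_le y x i).trans (mem_closedBall.1 hy)
  rw [Real.dist_eq, abs_le] at hyi
  have h2 : (0 : ℝ) < 2 ^ j := by positivity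
  exact Finset.mem_Icc.2 ⟨Int.floor_le_floor (by nlinarith), Int.floor_le_floor (by nlinarith)⟩

noncomputable def cubeContent (s : ℝ) (p : ℕ × (Fin d → ℤ)) : ℝ≥0∞ :=
  ENNReal.ofReal (diam (dyadicCube p.1 p.2) ^ s)

variable {s δ : ℝ}

theorem netPre_le_tsum {E : Set (EuclideanSpace ℝ (Fin d))} {C : Set (ℕ × (Fin d → ℤ))}
    (hC : C.Countable) (hE : E ⊆ ⋃ p ∈ C, dyadicCube p.1 p.2)
    (hCδ : ∀ p ∈ C, diam (dyadicCube p.1 p.2) ≤ δ) :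
    netPre s δ E ≤ ∑' p : C, cubeContent s p.val :=
  iInf_le_of_le C <| iInf_le_of_le hC <| iInf_le_of_le hE <| iInf_le _ hCδ

theorem exists_cover_tsum_lt_of_netPre_lt {E : Set (EuclideanSpace ℝ (Fin d))} {t : ℝ≥0∞}
    (h : netPre s δ E < t) :
    ∃ C : Set (ℕ × (Fin d → ℤ)), C.Countable ∧ E ⊆ ⋃ p ∈ C, dyadicCube p.1 p.2 ∧
      (∀ p ∈ C, diam (dyadicCube p.1 p.2) ≤ δ) ∧ ∑' p : C, cubeContent s p.val < t := by
  simp only [netPre, iInf_lt_iff, exists_prop] at h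
  exact h

theorem netPre_mono {E F : Set (EuclideanSpace ℝ (Fin d))} (h : E ⊆ F) :
    netPre s δ E ≤ netPre s δ F :=
  le_iInf₂ fun _ hC => le_iInf₂ fun hF hCδ => netPre_le_tsum hC (h.trans hF) hCδ

theorem netPre_iUnion_le {ι : Type*} [Countable ι] (E : ι → Set (EuclideanSpace ℝ (Fin d))) :
    netPre s δ (⋃ i, E i) ≤ ∑' i, netPre s δ (E i) := by
  refine ENNReal.le_of_forall_pos_le_add fun ε hε hfin => ?_
  obtain ⟨ε', hε'0, hε'⟩ := ENNReal.exists_pos_sum_of_countable' (ENNReal.coe_ne_zero.2 hε.ne') ι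
  have hC : ∀ i, ∃ C : Set (ℕ × (Fin d → ℤ)), C.Countable ∧ E i ⊆ ⋃ p ∈ C, dyadicCube p.1 p.2 ∧
      (∀ p ∈ C, diam (dyadicCube p.1 p.2) ≤ δ) ∧
      ∑' p : C, cubeContent s p.val < netPre s δ (E i) + ε' i := fun i =>
    exists_cover_tsum_lt_of_netPre_lt <|
      ENNReal.lt_add_right (ENNReal.ne_top_of_tsum_ne_top hfin.ne i) (hε'0 i).ne'
  choose C hCc hEC hCδ hCsum using hC
  have hcover : ⋃ i, E i ⊆ ⋃ p ∈ ⋃ i, C i, dyadicCube p.1 p.2 := iUnion_subset fun i =>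
    (hEC i).trans (biUnion_subset_biUnion_left (subset_iUnion C i))
  calc netPre s δ (⋃ i, E i) ≤ ∑' p : ⋃ i, C i, cubeContent s p.val :=
        netPre_le_tsum (countable_iUnion hCc) hcover fun p hp =>
          let ⟨i, hi⟩ := mem_iUnion.1 hp; hCδ i p hi
    _ ≤ ∑' i, ∑' p : C i, cubeContent s p.val := ENNReal.tsum_iUnion_le_tsum _ C
    _ ≤ ∑' i, (netPre s δ (E i) + ε' i) := ENNReal.tsum_le_tsum fun i => (hCsum i).le
    _ ≤ ∑' i, netPre s δ (E i) + ε := by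
        rw [ENNReal.tsum_add]
        gcongr

theorem netPre_union_le (E F : Set (EuclideanSpace ℝ (Fin d))) :
    netPre s δ (E ∪ F) ≤ netPre s δ E + netPre s δ F := by
  rw [union_eq_iUnion]
  refine (netPre_iUnion_le _).trans_eq ?_
  rw [tsum_fintype, Fintype.sum_bool, cond_true, cond_false]

theorem netPre_le_sum {E : Set (EuclideanSpace ℝ (Fin d))} {j : ℕ} (hj : √d / 2 ^ j ≤ δ)
    {F : Finset (Fin d → ℤ)} (hE : E ⊆ ⋃ m ∈ F, dyadicCube j m) :
    netPre s δ E ≤ ∑ m ∈ F, cubeContent s (j, m) := by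
  have hinj : Function.Injective (Prod.mk j : (Fin d → ℤ) → ℕ × (Fin d → ℤ)) :=
    Prod.mk_right_injective j
  calc netPre s δ E ≤ ∑' p : ↑(F.image (Prod.mk j)), cubeContent s p.val := by
        refine netPre_le_tsum (Finset.countable_toSet _) ?_ ?_
        · simpa [Finset.coe_image] using hE
        · intro p hp
          obtain ⟨m, -, rfl⟩ := Finset.mem_image.1 hp
          exact (diam_dyadicCube_le j m).trans hj
    _ = ∑ m ∈ F, cubeContent s (j, m) := by
        rw [Finset.tsum_subtype, Finset.sum_image hinj.injOn]

theorem netPre_lt_top {E : Set (EuclideanSpace ℝ (Fin d))} (hδ : 0 < δ)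
    (hE : Bornology.IsBounded E) : netPre s δ E < ⊤ := by
  obtain ⟨R, hR⟩ := hE.subset_closedBall 0
  obtain ⟨j, hj⟩ : ∃ j : ℕ, √d / 2 ^ j ≤ δ := ((tendsto_const_nhds.div_atTop
    (tendsto_pow_atTop_atTop_of_one_lt one_lt_two)).eventually (ge_mem_nhds hδ)).exists
  exact (netPre_le_sum hj (hR.trans (closedBall_subset_iUnion_dyadicCube 0 R j))).trans_lt
    (ENNReal.sum_lt_top.2 fun _ _ => ENNReal.ofReal_lt_top)

theorem netPre_closedBall_le (hs : 0 ≤ s) (x : EuclideanSpace ℝ (Fin d)) {R : ℝ} (hR : 0 < R)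
    (hR1 : 2 * R ≤ 1) (hRδ : 4 * √d * R ≤ δ) :
    netPre s δ (closedBall x R) ≤ 2 ^ d * ENNReal.ofReal (4 * √d * R) ^ s := by
  obtain ⟨j, hj₁, hj₂⟩ := exists_nat_pow_near (one_le_inv_iff₀.2 ⟨by positivity, hR1⟩) one_lt_two
  have h2 : (0 : ℝ) < 2 ^ j := by positivity
  rw [le_inv_comm₀ h2 (by positivity), ← one_div, le_div_iff₀ h2] at hj₁
  rw [inv_lt_iff_one_lt_mul₀ (by positivity), pow_succ] at hj₂
  have hcube : √d / 2 ^ j ≤ 4 * √d * R := by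
    rw [div_le_iff₀ h2]
    nlinarith [Real.sqrt_nonneg d]
  have hcard : ∀ i, (Finset.Icc ⌊(x i - R) * 2 ^ j⌋ ⌊(x i + R) * 2 ^ j⌋).card ≤ 2 := fun i => by
    have : ⌊(x i + R) * 2 ^ j⌋ ≤ ⌊(x i - R) * 2 ^ j⌋ + 1 := by
      rw [← Int.floor_add_one]
      exact Int.floor_le_floor (by nlinarith)
    rw [Int.card_Icc]
    omega
  calc netPre s δ (closedBall x R)
      ≤ ∑ m ∈ Fintype.piFinset fun i => Finset.Icc ⌊(x i - R) * 2 ^ j⌋ ⌊(x i + R) * 2 ^ j⌋,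
          cubeContent s (j, m) :=
        netPre_le_sum (hcube.trans hRδ) (closedBall_subset_iUnion_dyadicCube x R j)
    _ ≤ ∑ m ∈ Fintype.piFinset fun i => Finset.Icc ⌊(x i - R) * 2 ^ j⌋ ⌊(x i + R) * 2 ^ j⌋,
          ENNReal.ofReal (4 * √d * R) ^ s := by
        gcongr with m
        rw [cubeContent, ← ENNReal.ofReal_rpow_of_nonneg diam_nonneg hs]
        gcongr
        exact (diam_dyadicCube_le j m).trans hcube
    _ ≤ 2 ^ d * ENNReal.ofReal (4 * √d * R) ^ s := by
        rw [Finset.sum_const, nsmul_eq_mul, Fintype.card_piFinset]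
        gcongr
        exact_mod_cast (Finset.prod_le_pow_card _ _ _ fun i _ => hcard i).trans_eq
          (by rw [Finset.card_univ, Fintype.card_fin])

theorem exists_isOpen_netPre_le {α : ℝ} (hα : 0 < α) (hδ : 0 < δ)
    {S : Set (EuclideanSpace ℝ (Fin d))} (hS : μH[α] S = 0) {ε : ℝ≥0∞} (hε : ε ≠ 0) :
    ∃ U, IsOpen U ∧ S ⊆ U ∧ netPre α δ U ≤ ε := by
  set c : ℝ≥0∞ := 2 ^ d * ENNReal.ofReal (4 * √d) ^ α
  have hc : c ≠ ⊤ :=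
    ENNReal.mul_ne_top (by simp) (ENNReal.rpow_ne_top_of_nonneg hα.le ENNReal.ofReal_ne_top)
  obtain ⟨r, hr, hrδ⟩ := exists_pos_mul_lt hδ (4 * √d)
  obtain ⟨x, R, hR, hSR, hsum⟩ := exists_ball_cover_tsum_rpow_le hα hS
    (lt_min hr one_half_pos) (ENNReal.div_ne_zero.2 ⟨hε, hc⟩)
  have hball : ∀ n, netPre α δ (ball (x n) (R n)) ≤ c * ENNReal.ofReal (R n) ^ α := fun n => by
    obtain ⟨hR0, hRr⟩ := hR n
    refine (netPre_mono ball_subset_closedBall).trans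
      ((netPre_closedBall_le hα.le (x n) hR0 ?_ ?_).trans_eq ?_)
    · linarith [min_le_right r (1 / 2)]
    · exact (mul_le_mul_of_nonneg_left (hRr.trans (min_le_left _ _)) (by positivity)).trans hrδ.le
    · rw [ENNReal.ofReal_mul (by positivity), ENNReal.mul_rpow_of_nonneg _ _ hα.le, mul_assoc]
  refine ⟨⋃ n, ball (x n) (R n), isOpen_iUnion fun n => isOpen_ball, hSR, ?_⟩
  calc netPre α δ (⋃ n, ball (x n) (R n)) ≤ ∑' n, netPre α δ (ball (x n) (R n)) :=
        netPre_iUnion_le _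
    _ ≤ ∑' n, c * ENNReal.ofReal (R n) ^ α := ENNReal.tsum_le_tsum hball
    _ = c * ∑' n, ENNReal.ofReal (R n) ^ α := ENNReal.tsum_mul_left
    _ ≤ c * (ε / c) := by gcongr
    _ ≤ ε := ENNReal.mul_div_le

end NetPremeasure

theorem netPre_halfspace_continuous_general
    {d : ℕ} (hd : 0 < d) (K : Set (EuclideanSpace ℝ (Fin d)))
    (α : ℝ) (hα : 0 < α)
    (hslice : ∀ a : ℝ, μH[α] (K ∩ {x : EuclideanSpace ℝ (Fin d) | x ⟨0, hd⟩ = a}) = 0)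
    (L : Set (EuclideanSpace ℝ (Fin d))) (hL : L ⊆ K) (hLc : IsCompact L)
    (k : ℕ) :
    Continuous fun u : ℝ =>
      (netPre α ((2 : ℝ) ^ (-(k : ℤ)))
        (L ∩ {x : EuclideanSpace ℝ (Fin d) | x ⟨0, hd⟩ ≤ u})).toReal := by
  set δ : ℝ := (2 : ℝ) ^ (-(k : ℤ))
  have hδ : 0 < δ := by positivity
  have hfin : ∀ u, netPre α δ (L ∩ {x | x ⟨0, hd⟩ ≤ u}) ≠ ⊤ := fun u =>
    ((netPre_mono inter_subset_left).trans_lt (netPre_lt_top hδ hLc.isBounded)).ne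
  refine Monotone.continuous_of_forall_le_add (fun v w hvw => ENNReal.toReal_mono (hfin w)
    (netPre_mono (inter_subset_inter_right _ fun x (hx : _ ≤ v) => hx.trans hvw))) fun a ε hε => ?_
  obtain ⟨U, hUo, hSU, hU⟩ := exists_isOpen_netPre_le hα hδ
    (measure_mono_null (inter_subset_inter_left _ hL) (hslice a)) (ENNReal.ofReal_pos.2 hε).ne'
  obtain ⟨η, hη, hηU⟩ := hLc.exists_inter_preimage_closedBall_subset hUo
    (f := fun x => x ⟨0, hd⟩) (by fun_prop) hSU
  refine ⟨η, hη, ?_⟩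
  have hsplit : L ∩ {x | x ⟨0, hd⟩ ≤ a + η} ⊆ (L ∩ {x | x ⟨0, hd⟩ ≤ a - η}) ∪ U := by
    rintro x ⟨hxL, hx : x ⟨0, hd⟩ ≤ a + η⟩
    by_cases h : x ⟨0, hd⟩ ≤ a - η
    · exact Or.inl ⟨hxL, h⟩
    · refine Or.inr (hηU ⟨hxL, ?_⟩)
      rw [mem_preimage, Real.closedBall_eq_Icc]
      exact ⟨by linarith, hx⟩
  have hjump := (netPre_mono hsplit).trans ((netPre_union_le _ _).trans (add_le_add le_rfl hU))
  simpa only [ENNReal.toReal_ofReal hε.le] using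
    ENNReal.toReal_le_add hjump (hfin _) ENNReal.ofReal_ne_top

theorem netPre_halfspace_continuous
    {d : ℕ} (hd : 0 < d) (K : Set (EuclideanSpace ℝ (Fin d))) (hK : IsCompact K)
    (α : ℝ) (hα : 0 < α)
    (hslice : ∀ a : ℝ, μH[α] (K ∩ {x : EuclideanSpace ℝ (Fin d) | x ⟨0, hd⟩ = a}) = 0)
    (L : Set (EuclideanSpace ℝ (Fin d))) (hL : L ⊆ K) (hLc : IsCompact L)
    (k : ℕ) (hk : 0 < k) :
    Continuous fun u : ℝ =>
      (netPre α ((2 : ℝ) ^ (-(k : ℤ)))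
        (L ∩ {x : EuclideanSpace ℝ (Fin d) | x ⟨0, hd⟩ ≤ u})).toReal :=
  netPre_halfspace_continuous_general hd K α hα hslice L hL hLc k
end

section
/- Let K be an infinite compact subset of ℝ^d, let E be a compact subset of K and let α > 0. Assume H^α(E) < +∞. Then there exists a dense G_δ subset R_E of P(K) such that every μ ∈ R_E satisfies: for every x ∈ E, the lower local dimension dim_loc^-(μ;x) is at most α. -/
open MeasureTheory Filter Metric Set Topology
open scoped ENNReal

/-- The lower local dimension of a measure at a point:
`liminf_{r → 0⁺} log μ(B(x,r)) / log r`. -/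
noncomputable def lowerLocalDim {X : Type*} [MetricSpace X] [MeasurableSpace X]
    (μ : Measure X) (x : X) : EReal :=
  Filter.liminf (fun r : ℝ => ENNReal.log (μ (Metric.ball x r)) / (Real.log r : EReal))
    (nhdsWithin 0 (Set.Ioi 0))

/-- A probability measure on the subtype `↥K`, viewed as a Borel measure on `ℝ^d`. -/
noncomputable def measOn {d : ℕ} {K : Set (EuclideanSpace ℝ (Fin d))}
    (μ : ProbabilityMeasure K) : Measure (EuclideanSpace ℝ (Fin d)) :=
  (μ : Measure K).map Subtype.val

/-!
Let `U(β, ε)` be the set of probability measures that give every `x ∈ E` some ball `B(x, r)`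
with `r < ε` and mass larger than `r ^ β`. Lower semicontinuity of `μ ↦ μ G` for open
`G`, together with compactness of `E`, makes these sets open, and a measure lying in all of them
for `β = α + 1/(n+1)` has lower local dimension at most `α` on `E`.

Since `μH[α] E < ∞`, at every scale `δ_j` the set `E` is covered by balls `B(z, ρ)` with
`∑ ρ ^ α` uniformly bounded. The finite measure `m = ∑_j 2⁻ʲ ∑ ρ ^ α • δ_z` gives `B(x, 2ρ)` mass
at least `2⁻ʲ ρ ^ α`, which beats any constant times `(2ρ) ^ β` for `β > α` once `δ_j → 0` fast
enough. Hence every `ν ≥ c • m` with `c > 0` lies in all the sets `U(β, ε)`, and such `ν`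
(for instance `c • m + (1 - c) • μ`) are dense.
-/

open scoped NNReal

theorem exists_mem_Ioo_ofReal_add_rpow_lt {a p δ : ℝ} {b : ℝ≥0∞} (hap : a ≠ 0 ∨ 0 ≤ p)
    (hb : ENNReal.ofReal (a ^ p) < b) (hδ : 0 < δ) :
    ∃ η ∈ Ioo 0 δ, ENNReal.ofReal ((a + η) ^ p) < b := by
  have hcont : ContinuousAt (fun η : ℝ => ENNReal.ofReal ((a + η) ^ p)) 0 :=
    ENNReal.continuous_ofReal.continuousAt.comp <|
      (Real.continuousAt_rpow_const _ _ (by simpa using hap)).comp (by fun_prop)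
  have hlim : Tendsto (fun η : ℝ => ENNReal.ofReal ((a + η) ^ p)) (𝓝[>] 0)
      (𝓝 (ENNReal.ofReal (a ^ p))) := by
    simpa using hcont.tendsto.mono_left nhdsWithin_le_nhds
  have hsmall : ∀ᶠ η in 𝓝[>] (0 : ℝ), η ∈ Ioo 0 δ := Ioo_mem_nhdsGT hδ
  exact (hsmall.and (hlim.eventually_lt_const hb)).exists

theorem rpow_lt_sq_of_lt_pow {ρ q γ : ℝ} {n : ℕ} (hρ : 0 < ρ) (hq0 : 0 ≤ q) (hq1 : q ≤ 1)
    (hρq : ρ < q ^ (2 * (n + 1))) (hγ : 1 / ((n : ℝ) + 1) ≤ γ) : ρ ^ γ < q ^ 2 := by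
  have hρ1 : ρ ≤ 1 := hρq.le.trans (pow_le_one₀ hq0 hq1)
  calc ρ ^ γ ≤ ρ ^ (1 / ((n : ℝ) + 1)) := Real.rpow_le_rpow_of_exponent_ge hρ hρ1 hγ
    _ < (q ^ (2 * (n + 1))) ^ (1 / ((n : ℝ) + 1)) :=
        Real.rpow_lt_rpow hρ.le hρq (by positivity)
    _ = q ^ 2 := by
        rw [pow_mul, one_div, ← Nat.cast_succ, Real.pow_rpow_inv_natCast (by positivity)
          n.succ_ne_zero]

/- Radii below `((1/2)^j)^(2(j+1))` satisfy `ρ^(β-α) < (1/2)^(2j)` once `1/(j+1) ≤ β - α`: one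
factor `(1/2)^j` pays for the weight `(1/2)^j` given to scale `j`, the other for `c` and `2^β`. -/
theorem exists_forall_two_mul_rpow_lt {α β : ℝ} (hαβ : α < β) {c ε : ℝ} (hc : 0 < c)
    (hε : 0 < ε) : ∃ j : ℕ, ∀ ρ ∈ Ioo 0 ((((1 : ℝ) / 2) ^ j) ^ (2 * (j + 1))),
      2 * ρ < ε ∧ (2 * ρ) ^ β < c * ((1 / 2) ^ j * ρ ^ α) := by
  set q : ℕ → ℝ := fun j => (1 / 2) ^ j
  have hq : Tendsto q atTop (𝓝 0) :=
    tendsto_pow_atTop_nhds_zero_of_lt_one (by norm_num) (by norm_num)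
  have hγ : ∀ᶠ j : ℕ in atTop, 1 / ((j : ℝ) + 1) ≤ β - α :=
    tendsto_one_div_add_atTop_nhds_zero_nat.eventually_le_const (sub_pos.2 hαβ)
  have hqc : ∀ᶠ j in atTop, 2 ^ β * q j ≤ c :=
    (by simpa using hq.const_mul (2 ^ β) : Tendsto (fun j => 2 ^ β * q j) atTop (𝓝 0))
      |>.eventually_le_const hc
  have hqε : ∀ᶠ j in atTop, 2 * q j ≤ ε :=
    (by simpa using hq.const_mul 2 : Tendsto (fun j => 2 * q j) atTop (𝓝 0))
      |>.eventually_le_const hε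
  obtain ⟨j, hjγ, hjc, hjε⟩ := (hγ.and (hqc.and hqε)).exists
  refine ⟨j, fun ρ ⟨hρ0, hρq⟩ => ⟨?_, ?_⟩⟩
  · have : q j ^ (2 * (j + 1)) ≤ q j := pow_le_of_le_one (by positivity)
      (pow_le_one₀ (by norm_num) (by norm_num)) (by omega)
    linarith
  · have hρβ : ρ ^ (β - α) < q j ^ 2 :=
      rpow_lt_sq_of_lt_pow hρ0 (by positivity) (pow_le_one₀ (by norm_num) (by norm_num)) hρq hjγ
    calc (2 * ρ) ^ β = 2 ^ β * ρ ^ (β - α) * ρ ^ α := by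
          rw [Real.mul_rpow zero_le_two hρ0.le, mul_assoc, ← Real.rpow_add hρ0, sub_add_cancel]
      _ < 2 ^ β * q j ^ 2 * ρ ^ α := by gcongr
      _ = (2 ^ β * q j) * (q j * ρ ^ α) := by ring
      _ ≤ c * (q j * ρ ^ α) := by gcongr

section LocalDimension

variable {X : Type*} [MetricSpace X] [MeasurableSpace X]

theorem lowerLocalDim_le_of_frequently {μ : Measure X} {x : X} {β : ℝ}
    (h : ∃ᶠ r in 𝓝[>] 0, ENNReal.ofReal (r ^ β) ≤ μ (ball x r)) :
    lowerLocalDim μ x ≤ β := by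
  refine liminf_le_of_frequently_le ?_ (by isBoundedDefault)
  refine (h.and_eventually (Ioo_mem_nhdsGT one_pos)).mono fun r ⟨hr, hr0, hr1⟩ => ?_
  have hlog : Real.log r < 0 := Real.log_neg hr0 hr1
  have hle : ((β * Real.log r : ℝ) : EReal) ≤ ENNReal.log (μ (ball x r)) := by
    simpa [ENNReal.log_ofReal_of_pos (Real.rpow_pos_of_pos hr0 β), Real.log_rpow hr0] using
      ENNReal.log_monotone hr
  calc ENNReal.log (μ (ball x r)) / (Real.log r : EReal)
      ≤ ((β * Real.log r : ℝ) : EReal) / (Real.log r : EReal) :=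
        EReal.div_le_div_right_of_nonpos (by exact_mod_cast hlog.le) hle
    _ = β := by rw [← EReal.coe_div, mul_div_cancel_right₀ _ hlog.ne]

theorem Isometry.lowerLocalDim_map [OpensMeasurableSpace X] {Y : Type*} [MetricSpace Y]
    [MeasurableSpace Y] [BorelSpace Y] {f : X → Y} (hf : Isometry f) (μ : Measure X) (x : X) :
    lowerLocalDim (μ.map f) (f x) = lowerLocalDim μ x := by
  simp only [lowerLocalDim, Measure.map_apply hf.continuous.measurable measurableSet_ball,
    hf.preimage_ball]

def heavyBallSet (E : Set X) (β ε : ℝ) : Set (ProbabilityMeasure X) :=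
  {μ | ∀ x ∈ E, ∃ r ∈ Ioo 0 ε, ENNReal.ofReal (r ^ β) < (μ : Measure X) (ball x r)}

theorem mem_heavyBallSet_of_smul_le {m ν : ProbabilityMeasure X} {E : Set X} {β : ℝ}
    (hm : ∀ x ∈ E, ∀ c : ℝ≥0, 0 < c →
      ∃ᶠ r in 𝓝[>] 0, ENNReal.ofReal (r ^ β) < c * (m : Measure X) (ball x r))
    {c : ℝ≥0} (hc : 0 < c) (hν : c • (m : Measure X) ≤ ν) {ε : ℝ} (hε : 0 < ε) :
    ν ∈ heavyBallSet E β ε := fun x hx =>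
  let ⟨r, hr, hlt⟩ := (nhdsGT_basis 0).frequently_iff.1 (hm x hx c hc) ε hε
  ⟨r, hr, hlt.trans_le (hν _)⟩

theorem lowerLocalDim_le_of_forall_mem_heavyBallSet {μ : ProbabilityMeasure X} {E : Set X}
    {β : ℝ} (h : ∀ k : ℕ, μ ∈ heavyBallSet E β (1 / (k + 1))) {x : X} (hx : x ∈ E) :
    lowerLocalDim (μ : Measure X) x ≤ β := by
  refine lowerLocalDim_le_of_frequently ((nhdsGT_basis 0).frequently_iff.2 fun ε hε => ?_)
  obtain ⟨k, hk⟩ := exists_nat_one_div_lt hε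
  obtain ⟨r, ⟨hr0, hrk⟩, hlt⟩ := h k x hx
  exact ⟨r, ⟨hr0, hrk.trans hk⟩, hlt.le⟩

end LocalDimension

section WeakTopology

variable {X : Type*} [MetricSpace X] [MeasurableSpace X] [OpensMeasurableSpace X]

theorem MeasureTheory.ProbabilityMeasure.eventually_lt_measure_of_isOpen
    {μ : ProbabilityMeasure X} {G : Set X} (hG : IsOpen G) {c : ℝ≥0∞} (hc : c < (μ : Measure X) G) :
    ∀ᶠ ν : ProbabilityMeasure X in 𝓝 μ, c < (ν : Measure X) G :=
  eventually_lt_of_lt_liminf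
    (hc.trans_le (ProbabilityMeasure.le_liminf_measure_open_of_tendsto tendsto_id hG))

theorem isOpen_heavyBallSet {E : Set X} (hE : IsCompact E) (β ε : ℝ) :
    IsOpen (heavyBallSet E β ε) := by
  refine isOpen_iff_eventually.2 fun μ hμ => hE.eventually_forall_of_forall_eventually ?_
  intro x hx
  obtain ⟨r, ⟨hr0, hrε⟩, hlt⟩ := hμ x hx
  obtain ⟨θ, ⟨hθ0, hθ⟩, hθlt⟩ :=
    exists_mem_Ioo_ofReal_add_rpow_lt (Or.inl hr0.ne') hlt (sub_pos.2 hrε)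
  filter_upwards [(ProbabilityMeasure.eventually_lt_measure_of_isOpen isOpen_ball hθlt).prod_nhds
    (ball_mem_nhds x hθ0)] with p ⟨hν, hx'⟩
  refine ⟨r + θ, ⟨by positivity, by linarith⟩, hν.trans_le (measure_mono ?_)⟩
  exact ball_subset_ball' (by rw [dist_comm]; linarith [mem_ball.1 hx'])

theorem MeasureTheory.ProbabilityMeasure.dense_setOf_smul_le (m : ProbabilityMeasure X) :
    Dense {ν : ProbabilityMeasure X | ∃ c : ℝ≥0, 0 < c ∧ c • (m : Measure X) ≤ ν} := by
  intro μ
  set t : ℕ → ℝ≥0 := fun k => 1 / (k + 1)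
  have ht1 : ∀ k, t k ≤ 1 := fun k => div_le_one_of_le₀ (by simp) (by positivity)
  let ν : ℕ → ProbabilityMeasure X := fun k =>
    ⟨t k • (m : Measure X) + (1 - t k) • (μ : Measure X), ⟨by
      simpa using add_tsub_cancel_of_le (by exact_mod_cast ht1 k : (t k : ℝ≥0∞) ≤ 1)⟩⟩
  refine mem_closure_of_tendsto (f := ν) (b := atTop) ?_
    (Eventually.of_forall fun k => ⟨t k, by positivity, Measure.le_add_right le_rfl⟩)
  have ht : Tendsto (fun k => (t k : ℝ)) atTop (𝓝 0) :=
    NNReal.tendsto_coe.2 tendsto_one_div_add_atTop_nhds_zero_nat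
  rw [ProbabilityMeasure.tendsto_iff_forall_integral_tendsto]
  intro f
  have hν : ∀ k, ∫ x, f x ∂(ν k : Measure X)
      = t k * ∫ x, f x ∂(m : Measure X) + (1 - t k : ℝ) * ∫ x, f x ∂(μ : Measure X) := by
    intro k
    change ∫ x, f x ∂(t k • (m : Measure X) + (1 - t k) • (μ : Measure X)) = _
    rw [integral_add_measure (f.integrable _) (f.integrable _), integral_smul_nnreal_measure,
      integral_smul_nnreal_measure, NNReal.smul_def, NNReal.smul_def, NNReal.coe_sub (ht1 k)]
    simp
  simp only [hν]
  simpa using (ht.mul_const _).add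
    (((tendsto_const_nhds (x := (1 : ℝ))).sub ht).mul_const (∫ x, f x ∂(μ : Measure X)))

end WeakTopology

section DiracSum

variable {X : Type*} [MeasurableSpace X]

noncomputable def weightedDiracSum (α : ℝ) (z : ℕ → ℕ → X) (ρ : ℕ → ℕ → ℝ) : Measure X :=
  Measure.sum fun j => Measure.sum fun n =>
    ENNReal.ofReal ((1 / 2) ^ j * ρ j n ^ α) • Measure.dirac (z j n)

theorem ofReal_le_weightedDiracSum_apply {α : ℝ} {z : ℕ → ℕ → X} {ρ : ℕ → ℕ → ℝ} {s : Set X}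
    (hs : MeasurableSet s) {j n : ℕ} (hz : z j n ∈ s) :
    ENNReal.ofReal ((1 / 2) ^ j * ρ j n ^ α) ≤ weightedDiracSum α z ρ s := by
  refine le_trans ?_ ((Measure.le_sum _ n).trans (Measure.le_sum _ j) s)
  simp [Measure.dirac_apply' _ hs, hz]

theorem weightedDiracSum_univ_le {α : ℝ} {z : ℕ → ℕ → X} {ρ : ℕ → ℕ → ℝ} {C : ℝ≥0∞}
    (hC : ∀ j, ∑' n, ENNReal.ofReal (ρ j n ^ α) ≤ C) : weightedDiracSum α z ρ univ ≤ 2 * C := by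
  simp only [weightedDiracSum, Measure.sum_apply _ MeasurableSet.univ, Measure.smul_apply,
    measure_univ, smul_eq_mul, mul_one]
  calc ∑' j, ∑' n, ENNReal.ofReal ((1 / 2) ^ j * ρ j n ^ α)
      = ∑' j, ENNReal.ofReal ((1 / 2) ^ j) * ∑' n, ENNReal.ofReal (ρ j n ^ α) := by
        simp only [ENNReal.ofReal_mul (by positivity : (0 : ℝ) ≤ (1 / 2) ^ _),
          ENNReal.tsum_mul_left]
    _ ≤ ∑' j, ENNReal.ofReal ((1 / 2) ^ j) * C := by gcongr; exact hC _
    _ = 2 * C := by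
        rw [ENNReal.tsum_mul_right, ← ENNReal.ofReal_tsum_of_nonneg (fun j => by positivity)
          summable_geometric_two, tsum_geometric_two, ENNReal.ofReal_ofNat]

end DiracSum

section Construction

variable {X : Type*} [MetricSpace X] [MeasurableSpace X] [BorelSpace X]

theorem exists_cover_ediam_le_tsum_rpow_lt {E : Set X} {α : ℝ} (hα : 0 < α) {c : ℝ≥0∞}
    (hc : μH[α] E < c) {r : ℝ≥0∞} (hr : 0 < r) :
    ∃ t : ℕ → Set X, E ⊆ ⋃ n, t n ∧ (∀ n, ediam (t n) ≤ r) ∧ ∑' n, ediam (t n) ^ α < c := by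
  have hlt : (⨅ (t : ℕ → Set X) (_ : E ⊆ ⋃ n, t n) (_ : ∀ n, ediam (t n) ≤ r),
      ∑' n, ⨆ _ : (t n).Nonempty, ediam (t n) ^ α) < c := by
    refine lt_of_le_of_lt ?_ hc
    rw [Measure.hausdorffMeasure_apply]
    exact le_iSup₂_of_le r hr le_rfl
  simp only [iInf_lt_iff] at hlt
  obtain ⟨t, hcov, hdiam, hsum⟩ := hlt
  refine ⟨t, hcov, hdiam, lt_of_le_of_lt (ENNReal.tsum_le_tsum fun n => ?_) hsum⟩
  rcases (t n).eq_empty_or_nonempty with h | h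
  · simp [h, hα]
  · exact le_iSup_of_le h le_rfl

theorem exists_ball_cover_tsum_rpow_lt [Nonempty X] {E : Set X} {α : ℝ} (hα : 0 < α)
    {c : ℝ≥0∞} (hc : μH[α] E < c) {δ : ℝ} (hδ : 0 < δ) :
    ∃ (z : ℕ → X) (ρ : ℕ → ℝ), (∀ n, ρ n ∈ Ioo 0 δ) ∧ E ⊆ ⋃ n, ball (z n) (ρ n) ∧
      ∑' n, ENNReal.ofReal (ρ n ^ α) < c := by
  obtain ⟨c', hc', hc'c⟩ := exists_between hc
  obtain ⟨t, hcov, hdiam, hsum⟩ :=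
    exists_cover_ediam_le_tsum_rpow_lt hα hc' (ENNReal.ofReal_pos.2 (half_pos hδ))
  obtain ⟨ε, hε0, hεsum⟩ := ENNReal.exists_pos_sum_of_countable (tsub_pos_of_lt hc'c).ne' ℕ
  set D : ℕ → ℝ := fun n => (ediam (t n)).toReal
  have hD_ne_top : ∀ n, ediam (t n) ≠ ⊤ := fun n =>
    ne_top_of_le_ne_top ENNReal.ofReal_ne_top (hdiam n)
  have hD_le : ∀ n, D n ≤ δ / 2 := fun n =>
    ENNReal.toReal_le_of_le_ofReal (half_pos hδ).le (hdiam n)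
  have hDα : ∀ n, ENNReal.ofReal (D n ^ α) = ediam (t n) ^ α := fun n => by
    rw [← ENNReal.ofReal_rpow_of_nonneg ENNReal.toReal_nonneg hα.le,
      ENNReal.ofReal_toReal (hD_ne_top n)]
  have hη : ∀ n, ∃ η ∈ Ioo 0 (δ / 2), ENNReal.ofReal ((D n + η) ^ α) < ediam (t n) ^ α + ε n :=
    fun n => exists_mem_Ioo_ofReal_add_rpow_lt (Or.inr hα.le)
      ((hDα n).trans_lt (ENNReal.lt_add_right (by rw [← hDα n]; exact ENNReal.ofReal_ne_top)
        (by simpa using (hε0 n).ne'))) (half_pos hδ)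
  choose η hη hηlt using hη
  have hz : ∀ n, ∃ z, t n ⊆ ball z (D n + η n) := by
    intro n
    rcases (t n).eq_empty_or_nonempty with h | ⟨z, hz⟩
    · exact ⟨Classical.arbitrary X, by simp [h]⟩
    · refine ⟨z, fun y hy => mem_ball.2 (lt_of_le_of_lt ?_ (lt_add_of_pos_right _ (hη n).1))⟩
      rw [dist_edist]
      exact ENNReal.toReal_mono (hD_ne_top n) (edist_le_ediam_of_mem hy hz)
  choose z hz using hz
  refine ⟨z, fun n => D n + η n, fun n => ⟨?_, ?_⟩, hcov.trans (iUnion_mono hz), ?_⟩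
  · exact add_pos_of_nonneg_of_pos ENNReal.toReal_nonneg (hη n).1
  · linarith [hD_le n, (hη n).2]
  calc ∑' n, ENNReal.ofReal ((D n + η n) ^ α)
      ≤ ∑' n, (ediam (t n) ^ α + ε n) := ENNReal.tsum_le_tsum fun n => (hηlt n).le
    _ = ∑' n, ediam (t n) ^ α + ∑' n, (ε n : ℝ≥0∞) := ENNReal.tsum_add
    _ < c' + (c - c') := ENNReal.add_lt_add hsum hεsum
    _ = c := add_tsub_cancel_of_le hc'c.le

theorem exists_measure_frequently_rpow_lt [Nonempty X] {E : Set X} {α : ℝ} (hα : 0 < α)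
    (hfin : μH[α] E < ⊤) :
    ∃ m : Measure X, IsFiniteMeasure m ∧ m ≠ 0 ∧ ∀ β > α, ∀ x ∈ E, ∀ c : ℝ≥0, 0 < c →
      ∃ᶠ r in 𝓝[>] 0, ENNReal.ofReal (r ^ β) < c * m (ball x r) := by
  have hcov : ∀ j : ℕ, ∃ (z : ℕ → X) (ρ : ℕ → ℝ),
      (∀ n, ρ n ∈ Ioo 0 ((((1 : ℝ) / 2) ^ j) ^ (2 * (j + 1)))) ∧
      E ⊆ ⋃ n, ball (z n) (ρ n) ∧ ∑' n, ENNReal.ofReal (ρ n ^ α) < μH[α] E + 1 := fun j =>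
    exists_ball_cover_tsum_rpow_lt hα (ENNReal.lt_add_right hfin.ne one_ne_zero) (by positivity)
  choose z ρ hρ hcover hsum using hcov
  refine ⟨weightedDiracSum α z ρ, ⟨(weightedDiracSum_univ_le fun j => (hsum j).le).trans_lt
    (ENNReal.mul_lt_top ENNReal.ofNat_lt_top (ENNReal.add_lt_top.2 ⟨hfin, ENNReal.one_lt_top⟩))⟩,
    ?_, ?_⟩
  · intro h
    have h0 := ofReal_le_weightedDiracSum_apply (α := α) (ρ := ρ) MeasurableSet.univ
      (mem_univ (z 0 0))
    rw [h, Measure.coe_zero, Pi.zero_apply, nonpos_iff_eq_zero,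
      ENNReal.ofReal_eq_zero] at h0
    exact h0.not_gt (mul_pos (by positivity) (Real.rpow_pos_of_pos (hρ 0 0).1 α))
  intro β hβ x hx c hc
  rw [(nhdsGT_basis 0).frequently_iff]
  intro ε hε
  obtain ⟨j, hj⟩ := exists_forall_two_mul_rpow_lt hβ hc hε
  obtain ⟨n, hxn⟩ := mem_iUnion.1 (hcover j hx)
  obtain ⟨hρ0, -⟩ := hρ j n
  obtain ⟨hrε, hlt⟩ := hj (ρ j n) (hρ j n)
  have hz : z j n ∈ ball x (2 * ρ j n) := by
    rw [mem_ball, dist_comm]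
    linarith [mem_ball.1 hxn]
  refine ⟨2 * ρ j n, ⟨by positivity, hrε⟩, ?_⟩
  calc ENNReal.ofReal ((2 * ρ j n) ^ β) < ENNReal.ofReal (c * ((1 / 2) ^ j * ρ j n ^ α)) :=
        (ENNReal.ofReal_lt_ofReal_iff (by positivity)).2 hlt
    _ = c * ENNReal.ofReal ((1 / 2) ^ j * ρ j n ^ α) := by
        rw [ENNReal.ofReal_mul c.coe_nonneg, ENNReal.ofReal_coe_nnreal]
    _ ≤ c * weightedDiracSum α z ρ (ball x (2 * ρ j n)) := by
        gcongr; exact ofReal_le_weightedDiracSum_apply measurableSet_ball hz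

theorem exists_probabilityMeasure_frequently_rpow_lt [Nonempty X] {E : Set X} {α : ℝ}
    (hα : 0 < α) (hfin : μH[α] E < ⊤) :
    ∃ m : ProbabilityMeasure X, ∀ β > α, ∀ x ∈ E, ∀ c : ℝ≥0, 0 < c →
      ∃ᶠ r in 𝓝[>] 0, ENNReal.ofReal (r ^ β) < c * (m : Measure X) (ball x r) := by
  obtain ⟨m, hfinite, hm0, hm⟩ := exists_measure_frequently_rpow_lt hα hfin
  set M : FiniteMeasure X := ⟨m, hfinite⟩
  have hM0 : M ≠ 0 := fun h => hm0 (congrArg FiniteMeasure.toMeasure h)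
  refine ⟨M.normalize, fun β hβ x hx c hc => ?_⟩
  refine (hm β hβ x hx (c * M.mass⁻¹) (mul_pos hc (inv_pos.2 ?_))).mono fun r hr => ?_
  · exact pos_iff_ne_zero.2 (M.mass_nonzero_iff.2 hM0)
  rw [M.toMeasure_normalize_eq_of_nonzero hM0, Measure.coe_nnreal_smul_apply, ← mul_assoc]
  exact_mod_cast hr

theorem exists_denseGδ_forall_lowerLocalDim_le {E : Set X} (hE : IsCompact E) {α : ℝ}
    (hα : 0 < α) (hfin : μH[α] E < ⊤) :
    ∃ R : Set (ProbabilityMeasure X), Dense R ∧ IsGδ R ∧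
      ∀ μ ∈ R, ∀ x ∈ E, lowerLocalDim (μ : Measure X) x ≤ α := by
  cases isEmpty_or_nonempty X
  · exact ⟨univ, dense_univ, .univ, fun _ _ x => isEmptyElim x⟩
  obtain ⟨m, hm⟩ := exists_probabilityMeasure_frequently_rpow_lt hα hfin
  set β : ℕ → ℝ := fun n => α + 1 / (n + 1)
  have hβ : ∀ n, α < β n := fun n => lt_add_of_pos_right α (by positivity)
  refine ⟨⋂ (n : ℕ) (k : ℕ), heavyBallSet E (β n) (1 / (k + 1)), ?_, ?_, ?_⟩
  · refine m.dense_setOf_smul_le.mono ?_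
    rintro ν ⟨c, hc, hν⟩
    exact mem_iInter₂.2 fun n k =>
      mem_heavyBallSet_of_smul_le (hm (β n) (hβ n)) hc hν (by positivity)
  · exact .iInter fun n => .iInter fun k => (isOpen_heavyBallSet hE _ _).isGδ
  · intro μ hμ x hx
    have hlim : Tendsto (fun n => (β n : EReal)) atTop (𝓝 α) := EReal.tendsto_coe.2 <| by
      simpa [β] using tendsto_one_div_add_atTop_nhds_zero_nat.const_add α
    exact ge_of_tendsto' hlim fun n =>
      lowerLocalDim_le_of_forall_mem_heavyBallSet (fun k => mem_iInter₂.1 hμ n k) hx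

end Construction

theorem exists_denseGδ_lowerLocalDim_le_general
    {d : ℕ} (K : Set (EuclideanSpace ℝ (Fin d)))
    (E : Set (EuclideanSpace ℝ (Fin d))) (hEK : E ⊆ K) (hE : IsCompact E)
    (α : ℝ) (hα : 0 < α) (hfin : μH[α] E < ⊤) :
    ∃ R : Set (ProbabilityMeasure K), Dense R ∧ IsGδ R ∧
      ∀ μ ∈ R, ∀ x ∈ E, lowerLocalDim (measOn μ) x ≤ (α : EReal) := by
  have hE' : Subtype.val '' (Subtype.val ⁻¹' E : Set K) = E := by simpa using hEK
  obtain ⟨R, hR, hRGδ, hRdim⟩ := exists_denseGδ_forall_lowerLocalDim_le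
    (Subtype.isCompact_iff.2 (hE' ▸ hE)) hα
    (by rwa [← isometry_subtype_coe.hausdorffMeasure_image (Or.inl hα.le), hE'])
  exact ⟨R, hR, hRGδ, fun μ hμ x hx =>
    (isometry_subtype_coe.lowerLocalDim_map (μ : Measure K) ⟨x, hEK hx⟩).trans_le
      (hRdim μ hμ _ hx)⟩

theorem exists_denseGδ_lowerLocalDim_le
    {d : ℕ} (K : Set (EuclideanSpace ℝ (Fin d))) (hK : IsCompact K) (hinf : K.Infinite)
    (E : Set (EuclideanSpace ℝ (Fin d))) (hEK : E ⊆ K) (hE : IsCompact E)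
    (α : ℝ) (hα : 0 < α) (hfin : μH[α] E < ⊤) :
    ∃ R : Set (ProbabilityMeasure K), Dense R ∧ IsGδ R ∧
      ∀ μ ∈ R, ∀ x ∈ E, lowerLocalDim (measOn μ) x ≤ (α : EReal) :=
  exists_denseGδ_lowerLocalDim_le_general K E hEK hE α hα hfin
end

section
/- Let K be a nonempty compact subset of ℝ^d, let s > 0 and let m > l ≥ 1 be integers. Then the set U_{l,m} = {μ ∈ P(K) : for every x ∈ K there exists r ∈ (1/m, 1/l) such that μ(B(x,r)) < r^s} is open in P(K). -/
open MeasureTheory Filter Metric Set Topology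
open scoped ENNReal

theorem ProbabilityMeasure.upperSemicontinuous_measure_of_isClosed {Ω : Type*}
    [MeasurableSpace Ω] [TopologicalSpace Ω] [OpensMeasurableSpace Ω] [HasOuterApproxClosed Ω]
    {F : Set Ω} (hF : IsClosed F) :
    UpperSemicontinuous fun μ : ProbabilityMeasure Ω ↦ (μ : Measure Ω) F :=
  upperSemicontinuous_iff_limsup_le.2 fun _ ↦
    ProbabilityMeasure.limsup_measure_closed_le_of_tendsto tendsto_id hF

section measOn

variable {d : ℕ} {K : Set (EuclideanSpace ℝ (Fin d))}

theorem measOn_apply (μ : ProbabilityMeasure K) {A : Set (EuclideanSpace ℝ (Fin d))}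
    (hA : MeasurableSet A) : measOn μ A = (μ : Measure K) (Subtype.val ⁻¹' A) :=
  Measure.map_apply measurable_subtype_coe hA

theorem upperSemicontinuous_measOn_of_isClosed {F : Set (EuclideanSpace ℝ (Fin d))}
    (hF : IsClosed F) : UpperSemicontinuous fun μ : ProbabilityMeasure K ↦ measOn μ F := by
  simp only [measOn_apply _ hF.measurableSet]
  exact ProbabilityMeasure.upperSemicontinuous_measure_of_isClosed
    (hF.preimage continuous_subtype_val)

/-- Shrinking the radius turns the strict bound on `μ (B(x, r))` into one that persists for
all `(ν, y)` near `(μ, x)`: the balls `B(y, ρ)` stay inside a closed ball contained in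
`B(x, r)`, whose measure is upper semicontinuous in `ν`. -/
theorem eventually_measOn_ball_lt {μ : ProbabilityMeasure K} {x : EuclideanSpace ℝ (Fin d)}
    {ρ r : ℝ} {c : ℝ≥0∞} (hρr : ρ < r) (hμ : measOn μ (ball x r) < c) :
    ∀ᶠ p : ProbabilityMeasure K × EuclideanSpace ℝ (Fin d) in 𝓝 (μ, x),
      measOn p.1 (ball p.2 ρ) < c := by
  set δ := (r - ρ) / 2
  have hδ : 0 < δ := by simp only [δ]; linarith
  have hF : measOn μ (closedBall x (ρ + δ)) < c :=
    (measure_mono (closedBall_subset_ball (by simp only [δ]; linarith))).trans_lt hμ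
  have hν : ∀ᶠ ν in 𝓝 μ, measOn ν (closedBall x (ρ + δ)) < c :=
    upperSemicontinuous_measOn_of_isClosed isClosed_closedBall μ c hF
  have hy : ∀ᶠ y in 𝓝 x, dist y x < δ := ball_mem_nhds x hδ
  rw [nhds_prod_eq]
  filter_upwards [hν.prod_mk hy] with ⟨ν, y⟩ ⟨hνF, hyx⟩
  refine (measure_mono ?_).trans_lt hνF
  exact (ball_subset_ball' (by linarith)).trans ball_subset_closedBall

end measOn

theorem exists_mem_Ioo_lt_ofReal_rpow {a r s : ℝ} {c : ℝ≥0∞} (ha : 0 ≤ a) (har : a < r)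
    (hc : c < ENNReal.ofReal (r ^ s)) : ∃ ρ ∈ Ioo a r, c < ENNReal.ofReal (ρ ^ s) := by
  have hcont : ContinuousAt (fun ρ : ℝ ↦ ENNReal.ofReal (ρ ^ s)) r :=
    ENNReal.continuous_ofReal.continuousAt.comp
      (Real.continuousAt_rpow_const r s (Or.inl (ha.trans_lt har).ne'))
  have hlt : ∀ᶠ ρ in 𝓝[<] r, c < ENNReal.ofReal (ρ ^ s) :=
    (hcont.tendsto.mono_left nhdsWithin_le_nhds).eventually_const_lt hc
  have hIoo : ∀ᶠ ρ in 𝓝[<] r, ρ ∈ Ioo a r := Ioo_mem_nhdsLT har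
  exact (hIoo.and hlt).exists

theorem isOpen_U_general
    {d : ℕ} (K : Set (EuclideanSpace ℝ (Fin d))) (hK : IsCompact K)
    (s : ℝ) (l m : ℕ) :
    IsOpen {μ : ProbabilityMeasure K |
      ∀ x ∈ K, ∃ r : ℝ, 1 / (m : ℝ) < r ∧ r < 1 / (l : ℝ) ∧
        measOn μ (Metric.ball x r) < ENNReal.ofReal (r ^ s)} := by
  refine isOpen_iff_mem_nhds.2 fun μ hμ ↦ hK.eventually_forall_of_forall_eventually fun x hx ↦ ?_
  obtain ⟨r, hmr, hrl, hμr⟩ := hμ x hx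
  obtain ⟨ρ, ⟨hmρ, hρr⟩, hμρ⟩ := exists_mem_Ioo_lt_ofReal_rpow (by positivity) hmr hμr
  filter_upwards [eventually_measOn_ball_lt hρr hμρ] with p hp
  exact ⟨ρ, hmρ, hρr.trans hrl, hp⟩

theorem isOpen_U
    {d : ℕ} (K : Set (EuclideanSpace ℝ (Fin d))) (hK : IsCompact K) (hne : K.Nonempty)
    (s : ℝ) (hs : 0 < s) (l m : ℕ) (hl : 1 ≤ l) (hlm : l < m) :
    IsOpen {μ : ProbabilityMeasure K |
      ∀ x ∈ K, ∃ r : ℝ, 1 / (m : ℝ) < r ∧ r < 1 / (l : ℝ) ∧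
        measOn μ (Metric.ball x r) < ENNReal.ofReal (r ^ s)} :=
  isOpen_U_general K hK s l m
end

section
/- Let K be a nonempty compact subset of ℝ^d and let 0 < s < dim_{B,loc}(K), the local upper box dimension of K. Then for every integer l ≥ 1, the union over integers m > l of the sets U_{l,m} = {μ ∈ P(K) : for every x ∈ K there exists r ∈ (1/m, 1/l) such that μ(B(x,r)) < r^s} is dense in P(K). -/
/-!
Fix `s < t < dim_{B,loc} K`. Given `μ` and a small `δ`, partition `K` into measurable cells `A i`
of radius `δ` around a `δ`-separated net `e i`. Since `K ∩ B(e i, δ/8)` has upper box dimension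
`> t`, it contains, at arbitrarily small scales `g`, more than `g⁻¹ ^ t ≥ (2 / g) ^ s` points that
are pairwise more than `g` apart; choose such a cluster at a scale `g i < δ` and spread the mass
`μ(A i)` uniformly over it. Around a point within `δ/4` of the `i`-th cluster, the ball of radius
`g i / 2` contains at most one atom, of mass `< (g i / 2) ^ s`; around any other point the ball of
radius `δ/4` contains no atom at all. Only finitely many radii occur, which gives `m`. No mass
moves by more than `2δ`, so these measures converge weakly to `μ` as `δ → 0`.
-/

open MeasureTheory Filter Metric Set Topology
open scoped ENNReal

/-- Minimal number of balls of radius `r` needed to cover `E`. -/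
noncomputable def coverNum {X : Type*} [MetricSpace X] (E : Set X) (r : ℝ) : ℕ∞ :=
  ⨅ (s : Finset X) (_ : E ⊆ ⋃ x ∈ s, Metric.ball x r), (s.card : ℕ∞)

/-- The upper box (Minkowski) dimension of a set:
`limsup_{r → 0⁺} log N(E,r) / log (1/r)`. -/
noncomputable def upperBoxDim {X : Type*} [MetricSpace X] (E : Set X) : EReal :=
  Filter.limsup
    (fun r : ℝ => ((Real.log ((coverNum E r).toNat) / Real.log (1 / r) : ℝ) : EReal))
    (nhdsWithin 0 (Set.Ioi 0))

/-- The local upper box dimension of `K`: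
`inf_{x ∈ K, ρ > 0} upperBoxDim (K ∩ B(x,ρ))`. -/
noncomputable def localUpperBoxDim {X : Type*} [MetricSpace X] (K : Set X) : EReal :=
  ⨅ (x : X) (_ : x ∈ K) (ρ : ℝ) (_ : 0 < ρ), upperBoxDim (K ∩ Metric.ball x ρ)

open Function ProbabilityTheory

theorem TotallyBounded.exists_separated_cover {X : Type*} [MetricSpace X] {E : Set X}
    (hE : TotallyBounded E) {ε : ℝ} (hε : 0 < ε) :
    ∃ C : Finset X, (C : Set X) ⊆ E ∧ (C : Set X).Pairwise (ε < dist · ·) ∧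
      E ⊆ ⋃ c ∈ C, closedBall c ε := by
  have hε' : (ε.toNNReal : ℝ) = ε := Real.coe_toNNReal _ hε.le
  have hpack : packingNumber ε.toNNReal E ≠ ⊤ := by
    obtain ⟨N, -, hNfin, hN⟩ := exists_finite_isCover_of_totallyBounded
      (div_pos (Real.toNNReal_pos.2 hε) two_pos).ne' hE
    refine ne_top_of_le_ne_top (encard_ne_top_iff.2 hNfin) ?_
    calc packingNumber ε.toNNReal E = packingNumber (2 * (ε.toNNReal / 2)) E := by
          rw [mul_div_cancel₀ _ two_ne_zero]
      _ ≤ externalCoveringNumber (ε.toNNReal / 2) E :=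
          packingNumber_two_mul_le_externalCoveringNumber _ _
      _ ≤ N.encard := hN.externalCoveringNumber_le_encard
  have hfin : (maximalSeparatedSet ε.toNNReal E).Finite := by
    rw [← encard_ne_top_iff, encard_maximalSeparatedSet hpack]; exact hpack
  refine ⟨hfin.toFinset, by simpa using maximalSeparatedSet_subset, ?_, ?_⟩
  · intro a ha b hb hab
    simp only [Finite.coe_toFinset] at ha hb
    have : (ε.toNNReal : ℝ≥0∞) < edist a b := isSeparated_maximalSeparatedSet ha hb hab
    rwa [edist_dist, ← ENNReal.ofReal_coe_nnreal, hε', ENNReal.ofReal_lt_ofReal_iff_of_nonneg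
      hε.le] at this
  · simpa [hε'] using isCover_iff_subset_iUnion_closedBall.1 (isCover_maximalSeparatedSet hpack)

theorem eventually_rpow_le_inv_rpow {s t c : ℝ} (hst : s < t) (hc : 0 ≤ c) :
    ∀ᶠ r in 𝓝[>] (0 : ℝ), (c / r) ^ s ≤ r⁻¹ ^ t := by
  have hlim := (tendsto_rpow_atTop (sub_pos.2 hst)).comp tendsto_inv_nhdsGT_zero
  filter_upwards [hlim.eventually_ge_atTop (c ^ s), self_mem_nhdsWithin] with r hr (hr0 : 0 < r)
  have hr0' : 0 ≤ r⁻¹ := inv_nonneg.2 hr0.le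
  calc (c / r) ^ s = c ^ s * r⁻¹ ^ s := by rw [div_eq_mul_inv, Real.mul_rpow hc hr0']
    _ ≤ r⁻¹ ^ (t - s) * r⁻¹ ^ s := by gcongr; exact hr
    _ = r⁻¹ ^ t := by rw [← Real.rpow_add (inv_pos.2 hr0), sub_add_cancel]

theorem frequently_exists_separated_of_lt_upperBoxDim {X : Type*} [MetricSpace X] {E : Set X}
    (hE : TotallyBounded E) {t : ℝ} (ht : 0 < t) (htE : (t : EReal) < upperBoxDim E) :
    ∃ᶠ r in 𝓝[>] (0 : ℝ), ∃ F : Finset X, (F : Set X) ⊆ E ∧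
      (F : Set X).Pairwise (r / 2 < dist · ·) ∧ r⁻¹ ^ t < F.card := by
  have hfreq := frequently_lt_of_lt_limsup (by isBoundedDefault) htE
  refine (hfreq.and_eventually (Ioo_mem_nhdsGT (zero_lt_one' ℝ))).mono fun r ⟨hr, hr0, hr1⟩ => ?_
  obtain ⟨F, hFE, hFsep, hFcov⟩ := hE.exists_separated_cover (half_pos hr0)
  refine ⟨F, hFE, hFsep, ?_⟩
  have hcover : coverNum E r ≤ F.card :=
    iInf₂_le F (hFcov.trans (iUnion₂_mono fun c _ => closedBall_subset_ball (half_lt_self hr0)))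
  have hlog : 0 < Real.log (1 / r) := Real.log_pos (by rwa [one_div, one_lt_inv₀ hr0])
  rw [EReal.coe_lt_coe_iff, lt_div_iff₀ hlog] at hr
  set N := (coverNum E r).toNat
  have hN : 0 < N := by
    by_contra! h
    rw [nonpos_iff_eq_zero.1 h, Nat.cast_zero, Real.log_zero] at hr
    linarith [mul_pos ht hlog]
  calc r⁻¹ ^ t < N := by
        rw [← Real.exp_log (Nat.cast_pos.2 hN), Real.rpow_def_of_pos (inv_pos.2 hr0)]
        rw [one_div] at hr
        exact Real.exp_lt_exp.2 (by linarith)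
    _ ≤ F.card := by exact_mod_cast ENat.toNat_le_of_le_natCast hcover

def LocallyPacks (s : ℝ) (X : Type*) [MetricSpace X] : Prop :=
  ∀ z : X, ∀ ρ > 0, ∀ ε > 0, ∃ g ∈ Ioo 0 ε, ∃ F : Finset X, (F : Set X) ⊆ ball z ρ ∧
    (F : Set X).Pairwise (g < dist · ·) ∧ (2 / g) ^ s < F.card

theorem locallyPacks_of_lt_localUpperBoxDim {X : Type*} [MetricSpace X] {K : Set X}
    (hK : IsCompact K) {s : ℝ} (hs : 0 < s) (hsK : (s : EReal) < localUpperBoxDim K) :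
    LocallyPacks s K := by
  classical
  obtain ⟨t, hst, htK⟩ := EReal.exists_between_coe_real hsK
  rw [EReal.coe_lt_coe_iff] at hst
  rintro ⟨z, hz⟩ ρ hρ ε hε
  have htE : (t : EReal) < upperBoxDim (K ∩ ball z ρ) :=
    htK.trans_le (iInf₂_le_of_le z hz (iInf₂_le ρ hρ))
  obtain ⟨r, ⟨F, hFE, hFsep, hFcard⟩, hr4, hr0, hrε⟩ :=
    ((frequently_exists_separated_of_lt_upperBoxDim (hK.totallyBounded.subset inter_subset_left)
      (hs.trans hst) htE).and_eventually ((eventually_rpow_le_inv_rpow hst (c := 4)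
      (by norm_num)).and (Ioo_mem_nhdsGT hε))).exists
  have hFK : ∀ a ∈ F, a ∈ K := fun a ha => (hFE ha).1
  refine ⟨r / 2, ⟨half_pos hr0, by linarith⟩, F.subtype (· ∈ K), ?_, ?_, ?_⟩
  · intro a ha
    exact (hFE (Finset.mem_subtype.1 ha)).2
  · intro a ha b hb hab
    exact hFsep (Finset.mem_subtype.1 ha) (Finset.mem_subtype.1 hb) (Subtype.coe_ne_coe.2 hab)
  · rw [Finset.card_subtype, Finset.filter_true_of_mem hFK, div_div_eq_mul_div,
      show (2 : ℝ) * 2 = 4 by norm_num]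
    exact hr4.trans_lt hFcard

theorem exists_separated_measurable_partition {X : Type*} [MetricSpace X] [CompactSpace X]
    [MeasurableSpace X] [OpensMeasurableSpace X] {δ : ℝ} (hδ : 0 < δ) :
    ∃ (J : ℕ) (e : Fin J → X) (A : Fin J → Set X), Pairwise (fun i j => δ < dist (e i) (e j)) ∧
      (∀ i, MeasurableSet (A i)) ∧ Pairwise (Disjoint on A) ∧ ⋃ i, A i = univ ∧
      ∀ i, A i ⊆ closedBall (e i) δ := by
  obtain ⟨C, -, hCsep, hCcov⟩ := (isCompact_univ (X := X)).totallyBounded.exists_separated_cover hδ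
  let e : Fin C.card → X := fun i => C.equivFin.symm i
  refine ⟨C.card, e, disjointed fun i => closedBall (e i) δ, ?_, ?_, disjoint_disjointed _, ?_,
    disjointed_subset _⟩
  · intro i j hij
    exact hCsep (C.equivFin.symm i).2 (C.equivFin.symm j).2
      (Subtype.coe_ne_coe.2 (C.equivFin.symm.injective.ne hij))
  · exact fun i => disjointedRec (fun _ _ ht => ht.diff measurableSet_closedBall)
      measurableSet_closedBall
  · rw [iUnion_disjointed, eq_univ_iff_forall]
    intro x
    obtain ⟨c, hc, hxc⟩ := mem_iUnion₂.1 (hCcov (mem_univ x))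
    exact mem_iUnion.2 ⟨C.equivFin ⟨c, hc⟩, by simpa [e] using hxc⟩

theorem isProbabilityMeasure_sum_smul {X ι : Type*} [MeasurableSpace X] [Fintype ι]
    {μ : Measure X} [IsProbabilityMeasure μ] {A : ι → Set X} (hAm : ∀ i, MeasurableSet (A i))
    (hAd : Pairwise (Disjoint on A)) (hAu : ⋃ i, A i = univ) {ρ : ι → Measure X}
    (hρ : ∀ i, IsProbabilityMeasure (ρ i)) : IsProbabilityMeasure (∑ i, μ (A i) • ρ i) := by
  constructor
  simp only [Measure.coe_finsetSum, Finset.sum_apply, Measure.smul_apply, measure_univ,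
    smul_eq_mul, mul_one]
  rw [← (measure_iUnion hAd hAm).trans (tsum_fintype _), hAu, measure_univ]

theorem dist_integral_sum_smul_le {X ι : Type*} [TopologicalSpace X] [MeasurableSpace X]
    [OpensMeasurableSpace X] [Fintype ι] {μ : Measure X} [IsProbabilityMeasure μ]
    {A : ι → Set X} (hAm : ∀ i, MeasurableSet (A i)) (hAd : Pairwise (Disjoint on A))
    (hAu : ⋃ i, A i = univ) {ρ : ι → Measure X} (hρ : ∀ i, IsProbabilityMeasure (ρ i))
    (f : BoundedContinuousFunction X ℝ) {ζ : ℝ}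
    (hf : ∀ i, ∀ x ∈ A i, ∀ᵐ y ∂ρ i, dist (f y) (f x) ≤ ζ) :
    dist (∫ y, f y ∂(∑ i, μ (A i) • ρ i)) (∫ x, f x ∂μ) ≤ ζ := by
  have hcell : ∀ i, ∀ x ∈ A i, dist (∫ y, f y ∂ρ i) (f x) ≤ ζ := by
    intro i x hx
    have := norm_integral_le_of_norm_le_const (μ := ρ i) (f := fun y => f y - f x) (hf i x hx)
    rwa [integral_sub (f.integrable _) (integrable_const _), integral_const, probReal_univ,
      one_smul, mul_one, ← dist_eq_norm] at this
  have hsplit : ∫ x, f x ∂μ = ∑ i, ∫ x in A i, f x ∂μ := by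
    rw [← integral_iUnion_fintype hAm hAd fun i => (f.integrable μ).integrableOn, hAu,
      setIntegral_univ]
  rw [integral_finsetSum_measure fun i _ => (f.integrable _).smul_measure (measure_ne_top _ _),
    hsplit]
  calc dist (∑ i, ∫ y, f y ∂(μ (A i) • ρ i)) (∑ i, ∫ x in A i, f x ∂μ)
      ≤ ∑ i, dist (∫ y, f y ∂(μ (A i) • ρ i)) (∫ x in A i, f x ∂μ) := dist_sum_sum_le _ _ _
    _ ≤ ∑ i, ζ * μ.real (A i) := by
        gcongr with i
        rw [integral_smul_measure, ← measureReal_def, ← setIntegral_const, dist_eq_norm,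
          ← integral_sub (integrable_const _) (f.integrable _)]
        refine norm_setIntegral_le_of_norm_le_const (measure_lt_top _ _) fun x hx => ?_
        rw [← dist_eq_norm]
        exact hcell i x hx
    _ = ζ := by
        rw [← Finset.mul_sum, ← measureReal_iUnion_fintype hAd hAm, hAu, probReal_univ, mul_one]
theorem Set.Pairwise.subsingleton_inter_ball {X : Type*} [MetricSpace X] {F : Set X} {g : ℝ}
    (hF : F.Pairwise (g < dist · ·)) (x : X) : (F ∩ ball x (g / 2)).Subsingleton := by
  rintro a ⟨ha, hax⟩ b ⟨hb, hbx⟩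
  by_contra hab
  have := dist_triangle_right a b x
  rw [mem_ball] at hax hbx
  linarith [hF ha hb hab]

theorem uniformOn_le_inv_card {X : Type*} [MeasurableSpace X] [MeasurableSingletonClass X]
    {F : Finset X} {t : Set X} (h : ((F : Set X) ∩ t).Subsingleton) :
    uniformOn (F : Set X) t ≤ (F.card : ℝ≥0∞)⁻¹ := by
  classical
  rw [← uniformOn_inter_self F.finite_toSet]
  obtain h | ⟨a, h⟩ := h.eq_empty_or_singleton
  · simp [h]
  · rw [h, ← Finset.coe_singleton, uniformOn_apply_finset, ENNReal.div_eq_inv_mul]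
    calc (F.card : ℝ≥0∞)⁻¹ * (F ∩ {a}).card ≤ (F.card : ℝ≥0∞)⁻¹ * ({a} : Finset X).card := by
          gcongr; exact Finset.inter_subset_right
      _ = (F.card : ℝ≥0∞)⁻¹ := by simp

theorem inv_natCast_lt_ofReal_rpow {g s : ℝ} (hg : 0 < g) {n : ℕ} (hn : (2 / g) ^ s < n) :
    (n : ℝ≥0∞)⁻¹ < ENNReal.ofReal ((g / 2) ^ s) := by
  have hpos : 0 < (2 / g) ^ s := Real.rpow_pos_of_pos (by positivity) s
  rw [← inv_div, Real.inv_rpow (by positivity), ENNReal.ofReal_inv_of_pos hpos,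
    ENNReal.inv_lt_inv, ← ENNReal.ofReal_natCast, ENNReal.ofReal_lt_ofReal_iff (hpos.trans hn)]
  exact hn

theorem exists_radius_sum_smul_uniformOn_ball_lt {X ι : Type*} [MetricSpace X]
    [MeasurableSpace X] [MeasurableSingletonClass X] [Fintype ι] {δ s : ℝ} (hδ : 0 < δ)
    {e : ι → X} (he : Pairwise fun i j => δ < dist (e i) (e j))
    {g : ι → ℝ} (hg : ∀ i, g i ∈ Ioo 0 δ) {F : ι → Finset X}
    (hFe : ∀ i, (F i : Set X) ⊆ ball (e i) (δ / 8))
    (hFsep : ∀ i, (F i : Set X).Pairwise (g i < dist · ·))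
    (hFcard : ∀ i, (2 / g i) ^ s < (F i).card)
    {p : ι → ℝ≥0∞} (hp : ∀ i, p i ≤ 1) (x : X) :
    ∃ r ∈ insert (δ / 4) (Finset.univ.image fun i => g i / 2),
      (∑ i, p i • uniformOn (F i : Set X)) (ball x r) < ENNReal.ofReal (r ^ s) := by
  simp only [Measure.coe_finsetSum, Finset.sum_apply, Measure.smul_apply, smul_eq_mul]
  by_cases! hnear : ∃ i, ∃ a ∈ F i, dist x a < δ / 4
  · obtain ⟨i, a, ha, hxa⟩ := hnear
    refine ⟨g i / 2, Finset.mem_insert_of_mem (Finset.mem_image_of_mem _ (Finset.mem_univ i)), ?_⟩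
    have hfar : ∀ j ≠ i, uniformOn (F j : Set X) (ball x (g i / 2)) = 0 := by
      intro j hji
      rw [uniformOn_eq_zero_iff (F j).finite_toSet, eq_empty_iff_forall_notMem]
      rintro b ⟨hb, hbx⟩
      -- otherwise `dist (e i) (e j) < δ/8 + δ/4 + g i/2 + δ/8 < δ`
      have := dist_triangle4 (e i) a x b
      have := dist_triangle (e i) b (e j)
      have hae := mem_ball'.1 (hFe i ha)
      have hbe := mem_ball.1 (hFe j hb)
      rw [mem_ball'] at hbx
      linarith [he hji.symm, (hg i).2, dist_comm x a]
    rw [Finset.sum_eq_single i (fun j _ hji => by rw [hfar j hji, mul_zero]) (by simp)]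
    calc p i * uniformOn (F i : Set X) (ball x (g i / 2)) ≤ 1 * ((F i).card : ℝ≥0∞)⁻¹ :=
          mul_le_mul' (hp i) (uniformOn_le_inv_card ((hFsep i).subsingleton_inter_ball x))
      _ < _ := by rw [one_mul]; exact inv_natCast_lt_ofReal_rpow (hg i).1 (hFcard i)
  · refine ⟨δ / 4, Finset.mem_insert_self _ _, ?_⟩
    have hempty : ∀ i, uniformOn (F i : Set X) (ball x (δ / 4)) = 0 := by
      intro i
      rw [uniformOn_eq_zero_iff (F i).finite_toSet, eq_empty_iff_forall_notMem]
      rintro b ⟨hb, hbx⟩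
      exact (hnear i b hb).not_gt (mem_ball'.1 hbx)
    simp only [hempty, mul_zero, Finset.sum_const_zero]
    exact ENNReal.ofReal_pos.2 (Real.rpow_pos_of_pos (by positivity) s)

theorem mem_closure_of_forall_exists_dist_integral_le {X : Type*} [MetricSpace X] [CompactSpace X]
    [MeasurableSpace X] [OpensMeasurableSpace X] {S : Set (ProbabilityMeasure X)}
    {μ : ProbabilityMeasure X}
    (h : ∀ η > 0, ∃ ν ∈ S, ∀ (f : BoundedContinuousFunction X ℝ) (ζ : ℝ),
      (∀ a b, dist a b < η → dist (f a) (f b) ≤ ζ) →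
        dist (∫ x, f x ∂(ν : Measure X)) (∫ x, f x ∂(μ : Measure X)) ≤ ζ) :
    μ ∈ closure S := by
  choose ν hνS hν using fun n : ℕ => h (1 / (n + 1)) Nat.one_div_pos_of_nat
  refine mem_closure_of_tendsto ?_ (Eventually.of_forall (f := atTop) hνS)
  rw [ProbabilityMeasure.tendsto_iff_forall_integral_tendsto]
  intro f
  rw [Metric.tendsto_atTop]
  intro ε hε
  obtain ⟨η, hη, hf⟩ := Metric.uniformContinuous_iff.1
    (CompactSpace.uniformContinuous_of_continuous f.continuous) (ε / 2) (half_pos hε)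
  obtain ⟨N, hN⟩ := exists_nat_one_div_lt hη
  refine ⟨N, fun n hn => ?_⟩
  have hn' : 1 / ((n : ℝ) + 1) ≤ 1 / (N + 1) := Nat.one_div_le_one_div hn
  exact (hν n f (ε / 2) fun a b hab => (hf ((hab.trans_le hn').trans hN)).le).trans_lt
    (half_lt_self hε)

theorem exists_approx_measure_ball_lt {X : Type*} [MetricSpace X] [CompactSpace X]
    [MeasurableSpace X] [OpensMeasurableSpace X] {s : ℝ} (hX : LocallyPacks s X)
    (μ : ProbabilityMeasure X) {δ : ℝ} (hδ : 0 < δ) :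
    ∃ ν : ProbabilityMeasure X,
      (∃ r₀ > 0, ∀ x, ∃ r, r₀ < r ∧ r ≤ δ / 2 ∧
        (ν : Measure X) (ball x r) < ENNReal.ofReal (r ^ s)) ∧
      ∀ (f : BoundedContinuousFunction X ℝ) (ζ : ℝ),
        (∀ a b, dist a b < 2 * δ → dist (f a) (f b) ≤ ζ) →
          dist (∫ x, f x ∂(ν : Measure X)) (∫ x, f x ∂(μ : Measure X)) ≤ ζ := by
  obtain ⟨J, e, A, he, hAm, hAd, hAu, hAe⟩ := exists_separated_measurable_partition (X := X) hδ
  choose g hg F hFe hFsep hFcard using fun i => hX (e i) (δ / 8) (by positivity) δ hδ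
  have hρ : ∀ i, IsProbabilityMeasure (uniformOn (F i : Set X)) := fun i =>
    isProbabilityMeasure_uniformOn (F i).finite_toSet <| Finset.coe_nonempty.2 <|
      Finset.card_pos.1 <| Nat.cast_pos.1 <|
        (Real.rpow_pos_of_pos (div_pos two_pos (hg i).1) s).trans (hFcard i)
  refine ⟨⟨_, isProbabilityMeasure_sum_smul (μ := (μ : Measure X))
    (ρ := fun i => uniformOn (F i : Set X)) hAm hAd hAu hρ⟩, ?_,
    fun f ζ hf => dist_integral_sum_smul_le hAm hAd hAu hρ f fun i x hx => ?_⟩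
  · set R := insert (δ / 4) (Finset.univ.image fun i => g i / 2)
    have hR : ∀ r ∈ R, 0 < r ∧ r ≤ δ / 2 := by
      simp only [R, Finset.mem_insert, Finset.mem_image, Finset.mem_univ, true_and]
      rintro r (rfl | ⟨i, rfl⟩)
      · constructor <;> linarith
      · constructor <;> linarith [(hg i).1, (hg i).2]
    obtain ⟨r₁, hr₁R, hr₁⟩ := R.exists_min_image id (Finset.insert_nonempty _ _)
    refine ⟨r₁ / 2, half_pos (hR r₁ hr₁R).1, fun x => ?_⟩
    obtain ⟨r, hrR, hr⟩ := exists_radius_sum_smul_uniformOn_ball_lt hδ he hg hFe hFsep hFcard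
      (p := fun i => (μ : Measure X) (A i)) (fun i => prob_le_one) x
    exact ⟨r, (half_lt_self (hR r₁ hr₁R).1).trans_le (hr₁ r hrR), (hR r hrR).2, hr⟩
  · filter_upwards [ae_cond_mem (F i).measurableSet] with y hy
    refine hf y x ((dist_triangle y (e i) x).trans_lt ?_)
    linarith [mem_ball.1 (hFe i hy), mem_closedBall'.1 (hAe i hx)]

theorem dense_setOf_exists_measure_ball_lt {X : Type*} [MetricSpace X] [CompactSpace X]
    [MeasurableSpace X] [OpensMeasurableSpace X] {s R : ℝ} (hX : LocallyPacks s X) (hR : 0 < R) :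
    Dense {μ : ProbabilityMeasure X | ∃ r₀ > 0, ∀ x, ∃ r, r₀ < r ∧ r < R ∧
      (μ : Measure X) (ball x r) < ENNReal.ofReal (r ^ s)} := by
  intro μ
  refine mem_closure_of_forall_exists_dist_integral_le fun η hη => ?_
  have hδ : 0 < min (η / 2) R := lt_min (half_pos hη) hR
  obtain ⟨ν, ⟨r₀, hr₀, hν⟩, hclose⟩ := exists_approx_measure_ball_lt hX μ hδ
  refine ⟨ν, ⟨r₀, hr₀, fun x => ?_⟩, fun f ζ hf => hclose f ζ fun a b hab => hf a b ?_⟩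
  · obtain ⟨r, h₀, hr, hball⟩ := hν x
    exact ⟨r, h₀, by linarith [min_le_right (η / 2) R], hball⟩
  · linarith [min_le_left (η / 2) R]

theorem dense_union_U_general
    {d : ℕ} (K : Set (EuclideanSpace ℝ (Fin d))) (hK : IsCompact K)
    (s : ℝ) (hs : 0 < s) (hsK : (s : EReal) < localUpperBoxDim K)
    (l : ℕ) (hl : 1 ≤ l) :
    Dense {μ : ProbabilityMeasure K |
      ∃ m : ℕ, l < m ∧ ∀ x ∈ K, ∃ r : ℝ, 1 / (m : ℝ) < r ∧ r < 1 / (l : ℝ) ∧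
        measOn μ (Metric.ball x r) < ENNReal.ofReal (r ^ s)} := by
  have : CompactSpace K := isCompact_iff_compactSpace.1 hK
  refine (dense_setOf_exists_measure_ball_lt (locallyPacks_of_lt_localUpperBoxDim hK hs hsK)
    (one_div_pos.2 (Nat.cast_pos.2 hl))).mono ?_
  rintro μ ⟨r₀, hr₀, hμ⟩
  obtain ⟨m, hm⟩ := exists_nat_gt (max (l : ℝ) (1 / r₀))
  have hm₀ : (0 : ℝ) < m := (one_div_pos.2 hr₀).trans_le (le_max_right _ _) |>.trans hm
  refine ⟨m, by exact_mod_cast (le_max_left _ _).trans_lt hm, fun x hx => ?_⟩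
  obtain ⟨r, h₀, hr, hball⟩ := hμ ⟨x, hx⟩
  refine ⟨r, ((one_div_lt hm₀ hr₀).2 ((le_max_right _ _).trans_lt hm)).trans h₀, hr, ?_⟩
  rwa [measOn, Measure.map_apply measurable_subtype_coe measurableSet_ball]

theorem dense_union_U
    {d : ℕ} (K : Set (EuclideanSpace ℝ (Fin d))) (hK : IsCompact K) (hne : K.Nonempty)
    (s : ℝ) (hs : 0 < s) (hsK : (s : EReal) < localUpperBoxDim K)
    (l : ℕ) (hl : 1 ≤ l) :
    Dense {μ : ProbabilityMeasure K |
      ∃ m : ℕ, l < m ∧ ∀ x ∈ K, ∃ r : ℝ, 1 / (m : ℝ) < r ∧ r < 1 / (l : ℝ) ∧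
        measOn μ (Metric.ball x r) < ENNReal.ofReal (r ^ s)} :=
  dense_union_U_general K hK s hs hsK l hl
end
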